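/- Let p, q ≥ 1 and set n = 1 + p + q. Suppose D_F = [[0, a^T],[c, D_{F,x_0}]] ((1+p)×(1+p)) and D_H = [[0, b^T],[d, D_{H,x_0}]] ((1+q)×(1+q)), and define D = [[0, a^T, b^T],[c, D_{F,x_0}, c j^T + j b^T],[d, d j^T + j a^T, D_{H,x_0}]]. Suppose L_F = [[φ, f^T],[h, L_{F,x_0}]] and L_H = [[τ, g^T],[k, L_{H,x_0}]] satisfy L_F j = 0, L_H j = 0, L_F D_F + I = β_F j^T, and L_H D_H + I = β_H j^T for some vectors β_F, β_H. Define L = [[φ+τ, f^T, g^T],[h, L_{F,x_0}, 0],[k, 0, L_{H,x_0}]] and β with β_{x_0} = (β_F)_{x_0} + (β_H)_{x_0} - 1 and the remaining entries taken from β_F and β_H respectively. Then L j = 0 and L D + I = β j^T. -/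

import Mathlib

/-!
Restricted to the rows of `x₀` and `F`, the column of `D` at a vertex `y` of `H` is the
`x₀`-column of `D_F` plus the constant vector `b_y j`, which `L_F` kills since `L_F j = 0`.
Hence the rows of `L D` through `F` are the rows of `L_F D_F = β_F jᵀ - I` with every `H`-column
replaced by the `x₀`-column, symmetrically for `H`, and the row of `x₀` is the sum of the two
`x₀`-rows; its two identity entries at `x₀` account for the `- 1` in `β_{x₀}`.
-/

open Matrix

namespace Matrix

variable {R : Type*} [CommRing R]

theorem sum_mul_eq_sub_one_of_eq_add_const {κ ι : Type*} [Fintype κ] [DecidableEq κ]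
    {Λ Δ : Matrix κ κ R} {β : κ → R} (hΛ : Λ *ᵥ (fun _ => 1) = 0)
    (hΛΔ : Λ * Δ + 1 = vecMulVec β (fun _ => 1)) {E : κ → ι → R} (π : ι → κ) (s : ι → R)
    (hE : ∀ w v, E w v = Δ w (π v) + s v) (u : κ) (v : ι) :
    ∑ w, Λ u w * E w v = β u - (1 : Matrix κ κ R) u (π v) := by
  have hrow : ∑ w, Λ u w = 0 := by simpa [mulVec, dotProduct] using congr_fun hΛ u
  have hentry : (Λ * Δ) u (π v) + (1 : Matrix κ κ R) u (π v) = β u := by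
    simpa [vecMulVec_apply] using congr_fun₂ hΛΔ u (π v)
  simp only [hE, mul_add, Finset.sum_add_distrib, ← Finset.sum_mul, hrow, zero_mul, add_zero]
  rw [← mul_apply]
  exact eq_sub_of_add_eq hentry

variable {m n : Type*}

def bordered (x : R) (r c : m → R) (M : Matrix m m R) : Matrix (Unit ⊕ m) (Unit ⊕ m) R :=
  of fun u v =>
    match u, v with
    | Sum.inl _, Sum.inl _ => x
    | Sum.inl _, Sum.inr j => r j
    | Sum.inr i, Sum.inl _ => c i
    | Sum.inr i, Sum.inr j => M i j

def gluedDistance (a c : m → R) (b d : n → R) (DF0 : Matrix m m R) (DH0 : Matrix n n R) :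
    Matrix (Unit ⊕ m ⊕ n) (Unit ⊕ m ⊕ n) R :=
  of fun u v =>
    match u, v with
    | Sum.inl _, Sum.inl _ => 0
    | Sum.inl _, Sum.inr (Sum.inl j) => a j
    | Sum.inl _, Sum.inr (Sum.inr j) => b j
    | Sum.inr (Sum.inl i), Sum.inl _ => c i
    | Sum.inr (Sum.inl i), Sum.inr (Sum.inl j) => DF0 i j
    | Sum.inr (Sum.inl i), Sum.inr (Sum.inr j) => c i + b j
    | Sum.inr (Sum.inr i), Sum.inl _ => d i
    | Sum.inr (Sum.inr i), Sum.inr (Sum.inl j) => d i + a j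
    | Sum.inr (Sum.inr i), Sum.inr (Sum.inr j) => DH0 i j

def gluedLaplacian (φ τ : R) (f h : m → R) (g k : n → R) (LF0 : Matrix m m R)
    (LH0 : Matrix n n R) : Matrix (Unit ⊕ m ⊕ n) (Unit ⊕ m ⊕ n) R :=
  of fun u v =>
    match u, v with
    | Sum.inl _, Sum.inl _ => φ + τ
    | Sum.inl _, Sum.inr (Sum.inl j) => f j
    | Sum.inl _, Sum.inr (Sum.inr j) => g j
    | Sum.inr (Sum.inl i), Sum.inl _ => h i
    | Sum.inr (Sum.inl i), Sum.inr (Sum.inl j) => LF0 i j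
    | Sum.inr (Sum.inl _), Sum.inr (Sum.inr _) => 0
    | Sum.inr (Sum.inr i), Sum.inl _ => k i
    | Sum.inr (Sum.inr _), Sum.inr (Sum.inl _) => 0
    | Sum.inr (Sum.inr i), Sum.inr (Sum.inr j) => LH0 i j

def gluedVec (βF : Unit ⊕ m → R) (βH : Unit ⊕ n → R) : Unit ⊕ m ⊕ n → R
  | Sum.inl _ => βF (Sum.inl ()) + βH (Sum.inl ()) - 1
  | Sum.inr (Sum.inl i) => βF (Sum.inr i)
  | Sum.inr (Sum.inr i) => βH (Sum.inr i)

variable (a c : m → R) (b d : n → R) (DF0 : Matrix m m R) (DH0 : Matrix n n R)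

theorem gluedDistance_apply_map_inl (w : Unit ⊕ m) (v : Unit ⊕ m ⊕ n) :
    gluedDistance a c b d DF0 DH0 (Sum.map id Sum.inl w) v =
      bordered 0 a c DF0 w (Sum.elim Sum.inl (Sum.elim Sum.inr fun _ => Sum.inl ()) v) +
        Sum.elim (fun _ => 0) (Sum.elim (fun _ => 0) b) v := by
  rcases w with _ | i <;> rcases v with _ | j | j <;> simp [gluedDistance, bordered]

theorem gluedDistance_apply_map_inr (w : Unit ⊕ n) (v : Unit ⊕ m ⊕ n) :
    gluedDistance a c b d DF0 DH0 (Sum.map id Sum.inr w) v =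
      bordered 0 b d DH0 w (Sum.elim Sum.inl (Sum.elim (fun _ => Sum.inl ()) Sum.inr) v) +
        Sum.elim (fun _ => 0) (Sum.elim a fun _ => 0) v := by
  rcases w with _ | i <;> rcases v with _ | j | j <;> simp [gluedDistance, bordered]

variable [Fintype m] [Fintype n]
variable (φ τ : R) (f h : m → R) (g k : n → R) (LF0 : Matrix m m R) (LH0 : Matrix n n R)

theorem gluedLaplacian_mulVec_one (hF : bordered φ f h LF0 *ᵥ (fun _ => 1) = 0)
    (hH : bordered τ g k LH0 *ᵥ (fun _ => 1) = 0) :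
    gluedLaplacian φ τ f h g k LF0 LH0 *ᵥ (fun _ => 1) = 0 := by
  have rowF := fun u => congr_fun hF u
  have rowH := fun u => congr_fun hH u
  simp only [mulVec, dotProduct, Fintype.sum_sum_type, bordered, of_apply, mul_one,
    Finset.univ_unique, Finset.sum_singleton, Pi.zero_apply, Sum.forall] at rowF rowH
  ext (_ | i | i) <;>
    simp only [mulVec, dotProduct, Fintype.sum_sum_type, gluedLaplacian, of_apply, mul_one,
      Finset.univ_unique, Finset.sum_singleton, Finset.sum_const_zero, Pi.zero_apply]
  · linear_combination rowF.1 () + rowH.1 ()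
  · linear_combination rowF.2 i
  · linear_combination rowH.2 i

variable {ι : Type*} (N : Matrix (Unit ⊕ m ⊕ n) ι R) (v : ι)

theorem gluedLaplacian_mul_apply_inl :
    (gluedLaplacian φ τ f h g k LF0 LH0 * N) (Sum.inl ()) v =
      ∑ w, bordered φ f h LF0 (Sum.inl ()) w * N (Sum.map id Sum.inl w) v +
      ∑ w, bordered τ g k LH0 (Sum.inl ()) w * N (Sum.map id Sum.inr w) v := by
  simp only [gluedLaplacian, mul_apply, of_apply, Fintype.sum_sum_type, Finset.univ_unique,
    PUnit.default_eq_unit, Finset.sum_singleton, bordered, Sum.map_inl, id_eq, Sum.map_inr]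
  ring

theorem gluedLaplacian_mul_apply_inr_inl (i : m) :
    (gluedLaplacian φ τ f h g k LF0 LH0 * N) (Sum.inr (Sum.inl i)) v =
      ∑ w, bordered φ f h LF0 (Sum.inr i) w * N (Sum.map id Sum.inl w) v := by
  simp [mul_apply, Fintype.sum_sum_type, gluedLaplacian, bordered]

theorem gluedLaplacian_mul_apply_inr_inr (i : n) :
    (gluedLaplacian φ τ f h g k LF0 LH0 * N) (Sum.inr (Sum.inr i)) v =
      ∑ w, bordered τ g k LH0 (Sum.inr i) w * N (Sum.map id Sum.inr w) v := by
  simp [mul_apply, Fintype.sum_sum_type, gluedLaplacian, bordered]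

theorem gluedLaplacian_mul_gluedDistance_add_one [DecidableEq m] [DecidableEq n]
    {βF : Unit ⊕ m → R} {βH : Unit ⊕ n → R}
    (hFj : bordered φ f h LF0 *ᵥ (fun _ => 1) = 0) (hHj : bordered τ g k LH0 *ᵥ (fun _ => 1) = 0)
    (hFD : bordered φ f h LF0 * bordered 0 a c DF0 + 1 = vecMulVec βF (fun _ => 1))
    (hHD : bordered τ g k LH0 * bordered 0 b d DH0 + 1 = vecMulVec βH (fun _ => 1)) :
    gluedLaplacian φ τ f h g k LF0 LH0 * gluedDistance a c b d DF0 DH0 + 1 =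
      vecMulVec (gluedVec βF βH) (fun _ => 1) := by
  have rowF := sum_mul_eq_sub_one_of_eq_add_const hFj hFD _ _
    (gluedDistance_apply_map_inl a c b d DF0 DH0)
  have rowH := sum_mul_eq_sub_one_of_eq_add_const hHj hHD _ _
    (gluedDistance_apply_map_inr a c b d DF0 DH0)
  ext (_ | i | i) v
  · rw [add_apply, gluedLaplacian_mul_apply_inl, rowF, rowH]
    rcases v with _ | j | j <;>
      simp only [gluedVec, one_apply, vecMulVec_apply, Sum.elim_inl, Sum.elim_inr, reduceCtorEq,
        if_true, if_false, mul_one] <;> ring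
  · rw [add_apply, gluedLaplacian_mul_apply_inr_inl, rowF]
    rcases v with _ | j | j <;> simp [gluedVec, one_apply, vecMulVec_apply]
  · rw [add_apply, gluedLaplacian_mul_apply_inr_inr, rowH]
    rcases v with _ | j | j <;> simp [gluedVec, one_apply, vecMulVec_apply]

end Matrix

theorem stmt_17 {p q : ℕ}
    (a c : Fin p → ℝ) (b d : Fin q → ℝ)
    (DF0 : Matrix (Fin p) (Fin p) ℝ) (DH0 : Matrix (Fin q) (Fin q) ℝ)
    (DF : Matrix (Unit ⊕ Fin p) (Unit ⊕ Fin p) ℝ)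
    (hDF : DF = Matrix.of fun u v =>
      match u, v with
      | Sum.inl _, Sum.inl _ => 0
      | Sum.inl _, Sum.inr j => a j
      | Sum.inr i, Sum.inl _ => c i
      | Sum.inr i, Sum.inr j => DF0 i j)
    (DH : Matrix (Unit ⊕ Fin q) (Unit ⊕ Fin q) ℝ)
    (hDH : DH = Matrix.of fun u v =>
      match u, v with
      | Sum.inl _, Sum.inl _ => 0
      | Sum.inl _, Sum.inr j => b j
      | Sum.inr i, Sum.inl _ => d i
      | Sum.inr i, Sum.inr j => DH0 i j)
    (D : Matrix (Unit ⊕ Fin p ⊕ Fin q) (Unit ⊕ Fin p ⊕ Fin q) ℝ)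
    (hD : D = Matrix.of fun u v =>
      match u, v with
      | Sum.inl _, Sum.inl _ => 0
      | Sum.inl _, Sum.inr (Sum.inl j) => a j
      | Sum.inl _, Sum.inr (Sum.inr j) => b j
      | Sum.inr (Sum.inl i), Sum.inl _ => c i
      | Sum.inr (Sum.inl i), Sum.inr (Sum.inl j) => DF0 i j
      | Sum.inr (Sum.inl i), Sum.inr (Sum.inr j) => c i + b j
      | Sum.inr (Sum.inr i), Sum.inl _ => d i
      | Sum.inr (Sum.inr i), Sum.inr (Sum.inl j) => d i + a j
      | Sum.inr (Sum.inr i), Sum.inr (Sum.inr j) => DH0 i j)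
    (φ τ : ℝ) (f h : Fin p → ℝ) (g k : Fin q → ℝ)
    (LF0 : Matrix (Fin p) (Fin p) ℝ) (LH0 : Matrix (Fin q) (Fin q) ℝ)
    (LF : Matrix (Unit ⊕ Fin p) (Unit ⊕ Fin p) ℝ)
    (hLF : LF = Matrix.of fun u v =>
      match u, v with
      | Sum.inl _, Sum.inl _ => φ
      | Sum.inl _, Sum.inr j => f j
      | Sum.inr i, Sum.inl _ => h i
      | Sum.inr i, Sum.inr j => LF0 i j)
    (LH : Matrix (Unit ⊕ Fin q) (Unit ⊕ Fin q) ℝ)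
    (hLH : LH = Matrix.of fun u v =>
      match u, v with
      | Sum.inl _, Sum.inl _ => τ
      | Sum.inl _, Sum.inr j => g j
      | Sum.inr i, Sum.inl _ => k i
      | Sum.inr i, Sum.inr j => LH0 i j)
    (βF : Unit ⊕ Fin p → ℝ) (βH : Unit ⊕ Fin q → ℝ)
    (hLFj : LF.mulVec (fun _ => 1) = 0)
    (hLHj : LH.mulVec (fun _ => 1) = 0)
    (hLFD : LF * DF + 1 = vecMulVec βF (fun _ => 1))
    (hLHD : LH * DH + 1 = vecMulVec βH (fun _ => 1))
    (L : Matrix (Unit ⊕ Fin p ⊕ Fin q) (Unit ⊕ Fin p ⊕ Fin q) ℝ)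
    (hL : L = Matrix.of fun u v =>
      match u, v with
      | Sum.inl _, Sum.inl _ => φ + τ
      | Sum.inl _, Sum.inr (Sum.inl j) => f j
      | Sum.inl _, Sum.inr (Sum.inr j) => g j
      | Sum.inr (Sum.inl i), Sum.inl _ => h i
      | Sum.inr (Sum.inl i), Sum.inr (Sum.inl j) => LF0 i j
      | Sum.inr (Sum.inl _), Sum.inr (Sum.inr _) => 0
      | Sum.inr (Sum.inr i), Sum.inl _ => k i
      | Sum.inr (Sum.inr _), Sum.inr (Sum.inl _) => 0
      | Sum.inr (Sum.inr i), Sum.inr (Sum.inr j) => LH0 i j)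
    (β : Unit ⊕ Fin p ⊕ Fin q → ℝ)
    (hβ : β = fun u =>
      match u with
      | Sum.inl _ => βF (Sum.inl ()) + βH (Sum.inl ()) - 1
      | Sum.inr (Sum.inl i) => βF (Sum.inr i)
      | Sum.inr (Sum.inr i) => βH (Sum.inr i)) :
    L.mulVec (fun _ => 1) = 0 ∧ L * D + 1 = vecMulVec β (fun _ => 1) := by
  -- Distinct `match` auxiliaries only reduce on constructors, hence the entrywise `rfl`.
  obtain rfl : DF = bordered 0 a c DF0 := by rw [hDF]; ext (_ | _) (_ | _) <;> rfl
  obtain rfl : DH = bordered 0 b d DH0 := by rw [hDH]; ext (_ | _) (_ | _) <;> rfl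
  obtain rfl : LF = bordered φ f h LF0 := by rw [hLF]; ext (_ | _) (_ | _) <;> rfl
  obtain rfl : LH = bordered τ g k LH0 := by rw [hLH]; ext (_ | _) (_ | _) <;> rfl
  obtain rfl : D = gluedDistance a c b d DF0 DH0 := by
    rw [hD]; ext (_ | _ | _) (_ | _ | _) <;> rfl
  obtain rfl : L = gluedLaplacian φ τ f h g k LF0 LH0 := by
    rw [hL]; ext (_ | _ | _) (_ | _ | _) <;> rfl
  obtain rfl : β = gluedVec βF βH := by rw [hβ]; ext (_ | _ | _) <;> rfl
  exact ⟨gluedLaplacian_mulVec_one φ τ f h g k LF0 LH0 hLFj hLHj,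
    gluedLaplacian_mul_gluedDistance_add_one a c b d DF0 DH0 φ τ f h g k LF0 LH0
      hLFj hLHj hLFD hLHD⟩
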